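/- Let X > 0 be a strictly positive random variable with E[sin(tX)] ≥ 0 for all t ≥ 0, and let Y > 0 be a random variable with probability density function g(t) = (2/π)·E[sin(tX)]/t for t > 0. If E[X^s] < ∞ for some s ∈ (0,1), then E[Y^{−s}] = E[X^s] / (Γ(s+1)·cos(sπ/2)). -/

import Mathlib

open MeasureTheory Real Set Filter

open Topology

open scoped NNReal ENNReal

lemma aux_meas_rpow (c : ℝ) : Measurable (fun x : ℝ => x ^ c) := by
  apply measurable_of_continuousOn_compl_singleton (0 : ℝ)
  exact fun x hx => (Real.continuousAt_rpow_const x c (Or.inl hx)).continuousWithinAt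

lemma aux_meas_sinpow (s : ℝ) : Measurable (fun u : ℝ => u ^ (-s - 1) * Real.sin u) :=
  (aux_meas_rpow _).mul Real.measurable_sin

lemma aux_int_sinpow {s : ℝ} (hs1 : 0 < s) (hs2 : s < 1) :
    IntegrableOn (fun u : ℝ => u ^ (-s - 1) * Real.sin u) (Ioi 0) := by
  have hmeas := aux_meas_sinpow s
  have h1 : IntegrableOn (fun u : ℝ => u ^ (-s - 1) * Real.sin u) (Ioc 0 1) := by
    have hb : IntegrableOn (fun u : ℝ => u ^ (-s)) (Ioc 0 1) := by
      have := intervalIntegral.intervalIntegrable_rpow' (r := -s) (by linarith) (a := 0) (b := 1)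
      rwa [intervalIntegrable_iff, uIoc_of_le zero_le_one] at this
    refine Integrable.mono' hb hmeas.aestronglyMeasurable.restrict ?_
    filter_upwards [ae_restrict_mem measurableSet_Ioc] with u hu
    have hu0 : 0 < u := hu.1
    rw [norm_mul, norm_eq_abs, norm_eq_abs, abs_of_pos (rpow_pos_of_pos hu0 _)]
    calc u ^ (-s - 1) * |Real.sin u| ≤ u ^ (-s - 1) * u := by
          refine mul_le_mul_of_nonneg_left ?_ (rpow_pos_of_pos hu0 _).le
          exact (abs_sin_le_abs).trans_eq (abs_of_pos hu0)
      _ = u ^ (-s) := by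
          rw [← Real.rpow_add_one hu0.ne' (-s - 1)]; ring_nf
  have h2 : IntegrableOn (fun u : ℝ => u ^ (-s - 1) * Real.sin u) (Ioi 1) := by
    have hb : IntegrableOn (fun u : ℝ => u ^ (-s - 1)) (Ioi 1) :=
      integrableOn_Ioi_rpow_of_lt (by linarith) one_pos
    refine Integrable.mono' hb hmeas.aestronglyMeasurable.restrict ?_
    filter_upwards [ae_restrict_mem measurableSet_Ioi] with u hu
    have hu0 : (0:ℝ) < u := lt_trans one_pos hu
    rw [norm_mul, norm_eq_abs, norm_eq_abs, abs_of_pos (rpow_pos_of_pos hu0 _)]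
    calc u ^ (-s - 1) * |Real.sin u| ≤ u ^ (-s - 1) * 1 :=
          mul_le_mul_of_nonneg_left (abs_sin_le_one u) (rpow_pos_of_pos hu0 _).le
      _ = u ^ (-s - 1) := mul_one _
  have := h1.union h2
  rwa [Ioc_union_Ioi_eq_Ioi zero_le_one] at this

lemma aux_int_exp_sin {w : ℝ} (hw : 0 < w) :
    IntegrableOn (fun u : ℝ => Real.exp (-(w * u)) * Real.sin u) (Ioi 0) := by
  refine Integrable.mono' (g := fun u => Real.exp (-w * u)) (exp_neg_integrableOn_Ioi 0 hw)
    ((Real.measurable_exp.comp (measurable_const.mul measurable_id).neg).mul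
      Real.measurable_sin).aestronglyMeasurable.restrict ?_
  filter_upwards with u
  rw [norm_mul, norm_eq_abs, norm_eq_abs, abs_exp, neg_mul]
  exact mul_le_of_le_one_right (Real.exp_pos _).le (abs_sin_le_one u)

lemma aux_exp_sin {w : ℝ} (hw : 0 < w) :
    ∫ u in Ioi (0:ℝ), Real.exp (-(w * u)) * Real.sin u = 1 / (1 + w ^ 2) := by
  have hd : ∀ u ∈ Ici (0:ℝ), HasDerivAt
      (fun u => -(Real.exp (-(w * u)) * (w * Real.sin u + Real.cos u)) / (1 + w ^ 2))
      (Real.exp (-(w * u)) * Real.sin u) u := by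
    intro u _
    have h1 : HasDerivAt (fun u : ℝ => Real.exp (-(w * u))) (-w * Real.exp (-(w * u))) u := by
      have := (((hasDerivAt_id u).const_mul w).neg).exp
      simpa [mul_comm] using this
    have h2 : HasDerivAt (fun u : ℝ => w * Real.sin u + Real.cos u)
        (w * Real.cos u - Real.sin u) u :=
      ((Real.hasDerivAt_sin u).const_mul w).add (Real.hasDerivAt_cos u)
    have := ((h1.mul h2).neg).div_const (1 + w ^ 2)
    refine this.congr_deriv ?_
    have hne : 1 + w ^ 2 ≠ 0 := by positivity
    rw [div_eq_iff hne]
    ring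
  have ht : Tendsto
      (fun u => -(Real.exp (-(w * u)) * (w * Real.sin u + Real.cos u)) / (1 + w ^ 2))
      atTop (𝓝 0) := by
    have hb : Tendsto (fun u : ℝ => Real.exp (-(w * u))) atTop (𝓝 0) := by
      have h1 : Tendsto (fun u : ℝ => w * u) atTop atTop := tendsto_id.const_mul_atTop hw
      have h := Real.tendsto_exp_neg_atTop_nhds_zero.comp h1
      simpa [Function.comp_def] using h
    have : Tendsto (fun u => -(Real.exp (-(w * u)) * (w * Real.sin u + Real.cos u))) atTop (𝓝 0) := by
      rw [← neg_zero]
      apply Tendsto.neg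
      apply squeeze_zero_norm _ (by simpa using hb.const_mul (w + 1))
      intro u
      rw [norm_mul, norm_eq_abs, norm_eq_abs, abs_exp, mul_comm (w+1)]
      refine mul_le_mul_of_nonneg_left ?_ (Real.exp_pos _).le
      calc |w * Real.sin u + Real.cos u| ≤ |w * Real.sin u| + |Real.cos u| := abs_add_le _ _
        _ ≤ w * 1 + 1 := by
            gcongr
            · rw [abs_mul, abs_of_pos hw]
              exact mul_le_mul_of_nonneg_left (abs_sin_le_one u) hw.le
            · exact abs_cos_le_one u
        _ = w + 1 := by ring
    simpa using this.div_const (1 + w ^ 2)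
  have := integral_Ioi_of_hasDerivAt_of_tendsto' hd (aux_int_exp_sin hw) ht
  rw [this]
  norm_num
  rw [neg_div, neg_neg, one_div]



lemma aux_int_beta {a : ℝ} (ha1 : 0 < a) (ha2 : a < 1) :
    IntegrableOn (fun t : ℝ => t ^ (a - 1) / (1 + t)) (Ioi 0) := by
  have hmeas : Measurable (fun t : ℝ => t ^ (a - 1) / (1 + t)) :=
    (aux_meas_rpow _).div (measurable_const.add measurable_id)
  have h1 : IntegrableOn (fun t : ℝ => t ^ (a - 1) / (1 + t)) (Ioc 0 1) := by
    have hb : IntegrableOn (fun t : ℝ => t ^ (a - 1)) (Ioc 0 1) := by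
      have := intervalIntegral.intervalIntegrable_rpow' (r := a - 1) (by linarith) (a := 0) (b := 1)
      rwa [intervalIntegrable_iff, uIoc_of_le zero_le_one] at this
    refine Integrable.mono' hb hmeas.aestronglyMeasurable.restrict ?_
    filter_upwards [ae_restrict_mem measurableSet_Ioc] with t ht
    have ht0 : 0 < t := ht.1
    rw [norm_div, norm_eq_abs, norm_eq_abs, abs_of_pos (rpow_pos_of_pos ht0 _),
      abs_of_pos (by linarith : (0:ℝ) < 1 + t)]
    exact div_le_self (rpow_pos_of_pos ht0 _).le (by linarith)
  have h2 : IntegrableOn (fun t : ℝ => t ^ (a - 1) / (1 + t)) (Ioi 1) := by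
    have hb : IntegrableOn (fun t : ℝ => t ^ (a - 2)) (Ioi 1) :=
      integrableOn_Ioi_rpow_of_lt (by linarith) one_pos
    refine Integrable.mono' hb hmeas.aestronglyMeasurable.restrict ?_
    filter_upwards [ae_restrict_mem measurableSet_Ioi] with t ht
    have ht0 : (0:ℝ) < t := lt_trans one_pos ht
    rw [norm_div, norm_eq_abs, norm_eq_abs, abs_of_pos (rpow_pos_of_pos ht0 _),
      abs_of_pos (by linarith : (0:ℝ) < 1 + t)]
    rw [div_le_iff₀ (by linarith)]
    calc t ^ (a - 1) = t ^ (a - 2) * t := by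
          rw [← Real.rpow_add_one ht0.ne' (a - 2)]; ring_nf
      _ ≤ t ^ (a - 2) * (1 + t) := by
          refine mul_le_mul_of_nonneg_left (by linarith) (rpow_pos_of_pos ht0 _).le
  have := h1.union h2
  rwa [Ioc_union_Ioi_eq_Ioi zero_le_one] at this

lemma aux_exp_inner {r : ℝ} (hr : 0 < r) :
    ∫ w in Ioi (0:ℝ), Real.exp (-(r * w)) = 1 / r := by
  have := integral_rpow_mul_exp_neg_mul_Ioi (a := 1) (r := r) one_pos hr
  simp only [Real.rpow_one, Real.Gamma_one, mul_one, sub_self] at this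
  rw [← this]
  refine setIntegral_congr_fun measurableSet_Ioi (fun t ht => ?_)
  rw [Real.rpow_zero, one_mul]

lemma aux_beta_formula {a : ℝ} (ha1 : 0 < a) (ha2 : a < 1) :
    ∫ t in Ioi (0:ℝ), t ^ (a - 1) / (1 + t) = Real.Gamma a * Real.Gamma (1 - a) := by
  have key : ∫ t in Ioi (0:ℝ), t ^ (a - 1) / (1 + t)
      = ∫ t in Ioi (0:ℝ), ∫ w in Ioi (0:ℝ), t ^ (a - 1) * Real.exp (-((1 + t) * w)) := by
    refine setIntegral_congr_fun measurableSet_Ioi (fun t ht => ?_)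
    have ht0 : (0:ℝ) < t := ht
    rw [integral_const_mul, aux_exp_inner (by linarith : (0:ℝ) < 1 + t)]
    rw [mul_one_div]
  rw [key]
  -- Fubini
  have hmeasf : AEStronglyMeasurable
      (fun p : ℝ × ℝ => p.1 ^ (a - 1) * Real.exp (-((1 + p.1) * p.2)))
      ((volume.restrict (Ioi 0)).prod (volume.restrict (Ioi 0))) := by
    refine Measurable.aestronglyMeasurable ?_
    exact ((aux_meas_rpow (a-1)).comp measurable_fst).mul
      (Real.measurable_exp.comp (((measurable_const.add measurable_fst).mul measurable_snd).neg))
  have hInt : Integrable (fun p : ℝ × ℝ => p.1 ^ (a - 1) * Real.exp (-((1 + p.1) * p.2)))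
      ((volume.restrict (Ioi 0)).prod (volume.restrict (Ioi 0))) := by
    rw [integrable_prod_iff hmeasf]
    constructor
    · filter_upwards [ae_restrict_mem measurableSet_Ioi] with t ht
      have ht0 : (0:ℝ) < t := ht
      exact ((exp_neg_integrableOn_Ioi 0 (by linarith : (0:ℝ) < 1 + t)).congr_fun
        (fun w _ => by rw [neg_mul]) measurableSet_Ioi).const_mul _
    · refine (aux_int_beta ha1 ha2).congr ?_
      filter_upwards [ae_restrict_mem measurableSet_Ioi] with t ht
      have ht0 : (0:ℝ) < t := ht
      have hn : ∀ w : ℝ, ‖t ^ (a - 1) * Real.exp (-((1 + t) * w))‖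
          = t ^ (a - 1) * Real.exp (-((1 + t) * w)) := by
        intro w
        rw [norm_mul, norm_eq_abs, norm_eq_abs, abs_exp,
          abs_of_pos (rpow_pos_of_pos ht0 _)]
      simp only [hn]
      rw [integral_const_mul, aux_exp_inner (by linarith : (0:ℝ) < 1 + t), mul_one_div]
  rw [MeasureTheory.integral_integral_swap (f := fun t w => t ^ (a - 1) * Real.exp (-((1 + t) * w))) hInt]
  have inner2 : ∀ w ∈ Ioi (0:ℝ),
      ∫ t in Ioi (0:ℝ), t ^ (a - 1) * Real.exp (-((1 + t) * w))
      = Real.exp (-w) * ((1/w) ^ a * Real.Gamma a) := by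
    intro w hw
    have hw0 : (0:ℝ) < w := hw
    have : ∀ t : ℝ, t ^ (a - 1) * Real.exp (-((1 + t) * w))
        = Real.exp (-w) * (t ^ (a - 1) * Real.exp (-(w * t))) := by
      intro t
      rw [show -((1 + t) * w) = -w + -(w * t) by ring, Real.exp_add]
      ring
    simp only [this]
    rw [integral_const_mul, integral_rpow_mul_exp_neg_mul_Ioi ha1 hw0]
  rw [setIntegral_congr_fun measurableSet_Ioi inner2]
  have : ∀ w ∈ Ioi (0:ℝ), Real.exp (-w) * ((1/w) ^ a * Real.Gamma a)
      = Real.Gamma a * (Real.exp (-w) * w ^ ((1 - a) - 1)) := by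
    intro w hw
    have hw0 : (0:ℝ) < w := hw
    rw [one_div, ← Real.rpow_neg_one w, ← Real.rpow_mul hw0.le,
      show (-1) * a = 1 - a - 1 by ring]
    ring
  rw [setIntegral_congr_fun measurableSet_Ioi this, integral_const_mul,
    ← Real.Gamma_eq_integral (by linarith : (0:ℝ) < 1 - a)]

lemma aux_int_J {s : ℝ} (hs1 : 0 < s) (hs2 : s < 1) :
    IntegrableOn (fun w : ℝ => w ^ s / (1 + w ^ 2)) (Ioi 0) := by
  have hmeas : Measurable (fun w : ℝ => w ^ s / (1 + w ^ 2)) :=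
    (aux_meas_rpow _).div (measurable_const.add (measurable_id.pow_const 2))
  have h1 : IntegrableOn (fun w : ℝ => w ^ s / (1 + w ^ 2)) (Ioc 0 1) := by
    refine Integrable.mono' (g := fun _ => (1:ℝ))
      ((integrableOn_const_iff (C := (1:ℝ))).mpr (Or.inr measure_Ioc_lt_top))
      hmeas.aestronglyMeasurable.restrict ?_
    filter_upwards [ae_restrict_mem measurableSet_Ioc] with w hw
    have hw0 : 0 < w := hw.1
    have h2 : (0:ℝ) < 1 + w ^ 2 := by positivity
    rw [norm_div, norm_eq_abs, norm_eq_abs, abs_of_pos (rpow_pos_of_pos hw0 _), abs_of_pos h2]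
    rw [div_le_iff₀ h2, one_mul]
    calc w ^ s ≤ 1 := Real.rpow_le_one hw0.le hw.2 hs1.le
      _ ≤ 1 + w ^ 2 := by nlinarith
  have h2 : IntegrableOn (fun w : ℝ => w ^ s / (1 + w ^ 2)) (Ioi 1) := by
    have hb : IntegrableOn (fun w : ℝ => w ^ (s - 2)) (Ioi 1) :=
      integrableOn_Ioi_rpow_of_lt (by linarith) one_pos
    refine Integrable.mono' hb hmeas.aestronglyMeasurable.restrict ?_
    filter_upwards [ae_restrict_mem measurableSet_Ioi] with w hw
    have hw0 : (0:ℝ) < w := lt_trans one_pos hw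
    have hq : (0:ℝ) < 1 + w ^ 2 := by positivity
    rw [norm_div, norm_eq_abs, norm_eq_abs, abs_of_pos (rpow_pos_of_pos hw0 _), abs_of_pos hq]
    rw [div_le_iff₀ hq]
    calc w ^ s = w ^ (s - 2) * w ^ (2:ℝ) := by
          rw [← Real.rpow_add hw0]; ring_nf
      _ = w ^ (s - 2) * w ^ 2 := by rw [Real.rpow_two]
      _ ≤ w ^ (s - 2) * (1 + w ^ 2) := by
          refine mul_le_mul_of_nonneg_left (by nlinarith) (rpow_pos_of_pos hw0 _).le
  have := h1.union h2
  rwa [Ioc_union_Ioi_eq_Ioi zero_le_one] at this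

lemma aux_J {s : ℝ} (hs1 : 0 < s) (hs2 : s < 1) :
    ∫ w in Ioi (0:ℝ), w ^ s / (1 + w ^ 2) = π / (2 * Real.cos (s * π / 2)) := by
  have hsub := integral_comp_rpow_Ioi_of_pos
    (g := fun v : ℝ => v ^ ((s + 1) / 2 - 1) / (1 + v)) (p := 2) two_pos
  have hcong : ∀ x ∈ Ioi (0:ℝ),
      (2 * x ^ ((2:ℝ) - 1)) • ((x ^ (2:ℝ)) ^ ((s + 1) / 2 - 1) / (1 + x ^ (2:ℝ)))
      = 2 * (x ^ s / (1 + x ^ 2)) := by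
    intro x hx
    have hx0 : (0:ℝ) < x := hx
    rw [smul_eq_mul, ← Real.rpow_natCast x 2, ← Real.rpow_mul hx0.le]
    push_cast
    rw [show (2:ℝ) * ((s + 1) / 2 - 1) = s - 1 by ring, show (2:ℝ) - 1 = 1 by norm_num,
      Real.rpow_one]
    have hxs : x ^ s = x ^ (1:ℝ) * x ^ (s - 1) := by
      rw [← Real.rpow_add hx0]; norm_num
    rw [hxs, Real.rpow_one]
    ring
  rw [setIntegral_congr_fun measurableSet_Ioi hcong, integral_const_mul] at hsub
  have hbeta := aux_beta_formula (a := (s + 1) / 2) (by linarith) (by linarith)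
  rw [show (1:ℝ) - (s + 1) / 2 = (1 - s) / 2 by ring] at hbeta
  have hrefl := Real.Gamma_mul_Gamma_one_sub ((s + 1) / 2)
  rw [show (1:ℝ) - (s + 1) / 2 = (1 - s) / 2 by ring] at hrefl
  have hsin : Real.sin (π * ((s + 1) / 2)) = Real.cos (s * π / 2) := by
    rw [show π * ((s + 1) / 2) = s * π / 2 + π / 2 by ring, Real.sin_add_pi_div_two]
  rw [hsin] at hrefl
  have hcos : 0 < Real.cos (s * π / 2) := by
    apply Real.cos_pos_of_mem_Ioo
    constructor
    · nlinarith [Real.pi_pos]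
    · nlinarith [Real.pi_pos]
  have : ∫ w in Ioi (0:ℝ), w ^ s / (1 + w ^ 2)
      = (Real.Gamma ((s+1)/2) * Real.Gamma ((1-s)/2)) / 2 := by
    rw [← hbeta]
    linarith [hsub]
  rw [this, hrefl, div_div]
  ring_nf

lemma aux_int_gamma_scaled {s u : ℝ} (hs : 0 < s) (hu : 0 < u) :
    IntegrableOn (fun w : ℝ => w ^ s * Real.exp (-(u * w))) (Ioi 0) := by
  have := integrableOn_rpow_mul_exp_neg_mul_rpow (s := s) (p := 1) (b := u)
    (by linarith) one_pos hu
  refine this.congr_fun (fun w hw => ?_) measurableSet_Ioi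
  dsimp only
  rw [Real.rpow_one, neg_mul]

lemma aux_I {s : ℝ} (hs1 : 0 < s) (hs2 : s < 1) :
    ∫ u in Ioi (0:ℝ), u ^ (-s - 1) * Real.sin u
      = π / (2 * Real.Gamma (s + 1) * Real.cos (s * π / 2)) := by
  have hG : 0 < Real.Gamma (s + 1) := Real.Gamma_pos_of_pos (by linarith)
  have key : ∀ u ∈ Ioi (0:ℝ),
      Real.Gamma (s + 1) * (u ^ (-s - 1) * Real.sin u)
      = ∫ w in Ioi (0:ℝ), Real.sin u * (w ^ s * Real.exp (-(u * w))) := by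
    intro u hu
    have hu0 : (0:ℝ) < u := hu
    have hg := integral_rpow_mul_exp_neg_mul_Ioi (a := s + 1) (r := u) (by linarith) hu0
    rw [integral_const_mul]
    have : ∫ w in Ioi (0:ℝ), w ^ s * Real.exp (-(u * w)) = (1 / u) ^ (s + 1) * Real.Gamma (s + 1) := by
      rw [← hg]
      refine setIntegral_congr_fun measurableSet_Ioi (fun w hw => ?_)
      norm_num
    rw [this]
    have h1u : (1 / u) ^ (s + 1) = u ^ (-s - 1) := by
      rw [one_div, ← Real.rpow_neg_one u, ← Real.rpow_mul hu0.le]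
      norm_num
      ring_nf
    rw [h1u]; ring
  -- Fubini
  have hmeasf : AEStronglyMeasurable
      (fun p : ℝ × ℝ => Real.sin p.1 * (p.2 ^ s * Real.exp (-(p.1 * p.2))))
      ((volume.restrict (Ioi 0)).prod (volume.restrict (Ioi 0))) := by
    refine Measurable.aestronglyMeasurable ?_
    exact (Real.measurable_sin.comp measurable_fst).mul
      (((aux_meas_rpow s).comp measurable_snd).mul
        (Real.measurable_exp.comp ((measurable_fst.mul measurable_snd).neg)))
  have hInt : Integrable (fun p : ℝ × ℝ => Real.sin p.1 * (p.2 ^ s * Real.exp (-(p.1 * p.2))))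
      ((volume.restrict (Ioi 0)).prod (volume.restrict (Ioi 0))) := by
    rw [integrable_prod_iff hmeasf]
    constructor
    · filter_upwards [ae_restrict_mem measurableSet_Ioi] with u hu
      exact (aux_int_gamma_scaled hs1 hu).const_mul _
    · have hbase := ((aux_int_sinpow hs1 hs2).abs.const_mul (Real.Gamma (s + 1)))
      refine hbase.congr ?_
      filter_upwards [ae_restrict_mem measurableSet_Ioi] with u hu
      have hu0 : (0:ℝ) < u := hu
      have hn : ∀ w ∈ Ioi (0:ℝ), ‖Real.sin u * (w ^ s * Real.exp (-(u * w)))‖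
          = |Real.sin u| * (w ^ s * Real.exp (-(u * w))) := by
        intro w hw
        rw [norm_mul, norm_mul, norm_eq_abs, norm_eq_abs, norm_eq_abs, abs_exp,
          abs_of_pos (rpow_pos_of_pos hw _)]
      rw [setIntegral_congr_fun measurableSet_Ioi hn, integral_const_mul]
      have hg := integral_rpow_mul_exp_neg_mul_Ioi (a := s + 1) (r := u) (by linarith) hu0
      have heq : ∫ w in Ioi (0:ℝ), w ^ s * Real.exp (-(u * w))
          = (1 / u) ^ (s + 1) * Real.Gamma (s + 1) := by
        rw [← hg]
        refine setIntegral_congr_fun measurableSet_Ioi (fun w hw => ?_)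
        norm_num
      rw [heq]
      have h1u : (1 / u) ^ (s + 1) = u ^ (-s - 1) := by
        rw [one_div, ← Real.rpow_neg_one u, ← Real.rpow_mul hu0.le]
        norm_num
        ring_nf
      rw [h1u, abs_mul, abs_of_pos (rpow_pos_of_pos hu0 _)]
      ring
  have swap := MeasureTheory.integral_integral_swap
    (f := fun u w => Real.sin u * (w ^ s * Real.exp (-(u * w)))) hInt
  have lhs_eq : ∫ u in Ioi (0:ℝ), ∫ w in Ioi (0:ℝ), Real.sin u * (w ^ s * Real.exp (-(u * w)))
      = Real.Gamma (s + 1) * ∫ u in Ioi (0:ℝ), u ^ (-s - 1) * Real.sin u := by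
    rw [← integral_const_mul]
    exact (setIntegral_congr_fun measurableSet_Ioi key).symm
  have rhs_eq : ∫ w in Ioi (0:ℝ), ∫ u in Ioi (0:ℝ), Real.sin u * (w ^ s * Real.exp (-(u * w)))
      = π / (2 * Real.cos (s * π / 2)) := by
    rw [← aux_J hs1 hs2]
    refine setIntegral_congr_fun measurableSet_Ioi (fun w hw => ?_)
    have hw0 : (0:ℝ) < w := hw
    have : ∀ u : ℝ, Real.sin u * (w ^ s * Real.exp (-(u * w)))
        = w ^ s * (Real.exp (-(w * u)) * Real.sin u) := by
      intro u; rw [mul_comm u w]; ring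
    simp only [this]
    rw [integral_const_mul, aux_exp_sin hw0, mul_one_div]
  rw [lhs_eq, rhs_eq] at swap
  have hcos : 0 < Real.cos (s * π / 2) := by
    apply Real.cos_pos_of_mem_Ioo
    constructor
    · nlinarith [Real.pi_pos]
    · nlinarith [Real.pi_pos]
  field_simp at swap ⊢
  linarith [swap]

lemma aux_scale_eq {s x : ℝ} (hx : 0 < x) (t : ℝ) (ht : t ∈ Ioi (0:ℝ)) :
    t ^ (-s - 1) * Real.sin (t * x)
      = x ^ (s + 1) * ((x * t) ^ (-s - 1) * Real.sin (x * t)) := by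
  have ht0 : (0:ℝ) < t := ht
  rw [Real.mul_rpow hx.le ht0.le, mul_comm t x]
  rw [show x ^ (s + 1) * (x ^ (-s - 1) * t ^ (-s - 1) * Real.sin (x * t))
      = (x ^ (s + 1) * x ^ (-s - 1)) * (t ^ (-s - 1) * Real.sin (x * t)) by ring]
  rw [← Real.rpow_add hx, show s + 1 + (-s - 1) = 0 by ring, Real.rpow_zero, one_mul]

lemma aux_int_sin_scaled {s x : ℝ} (hs1 : 0 < s) (hs2 : s < 1) (hx : 0 < x) :
    IntegrableOn (fun t : ℝ => t ^ (-s - 1) * Real.sin (t * x)) (Ioi 0) := by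
  have base : IntegrableOn (fun u : ℝ => u ^ (-s - 1) * Real.sin u) (Ioi (x * 0)) := by
    rw [mul_zero]; exact aux_int_sinpow hs1 hs2
  have := ((integrableOn_Ioi_comp_mul_left_iff
    (fun u : ℝ => u ^ (-s - 1) * Real.sin u) 0 hx).mpr base).const_mul (x ^ (s + 1))
  exact IntegrableOn.congr_fun this (fun t ht => (aux_scale_eq hx t ht).symm)
    measurableSet_Ioi

lemma aux_scale {s x : ℝ} (hs1 : 0 < s) (hs2 : s < 1) (hx : 0 < x) :
    ∫ t in Ioi (0:ℝ), t ^ (-s - 1) * Real.sin (t * x)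
      = x ^ s * ∫ u in Ioi (0:ℝ), u ^ (-s - 1) * Real.sin u := by
  have h := integral_comp_mul_left_Ioi (fun u : ℝ => u ^ (-s - 1) * Real.sin u) 0 hx
  rw [mul_zero] at h
  calc ∫ t in Ioi (0:ℝ), t ^ (-s - 1) * Real.sin (t * x)
      = ∫ t in Ioi (0:ℝ), x ^ (s + 1) * ((x * t) ^ (-s - 1) * Real.sin (x * t)) :=
        setIntegral_congr_fun measurableSet_Ioi (aux_scale_eq hx)
    _ = x ^ (s + 1) * ∫ t in Ioi (0:ℝ), (x * t) ^ (-s - 1) * Real.sin (x * t) :=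
        integral_const_mul _ _
    _ = x ^ (s + 1) * (x⁻¹ * ∫ u in Ioi (0:ℝ), u ^ (-s - 1) * Real.sin u) := by
        rw [h, smul_eq_mul]
    _ = x ^ s * ∫ u in Ioi (0:ℝ), u ^ (-s - 1) * Real.sin u := by
        rw [← mul_assoc, ← Real.rpow_neg_one x, ← Real.rpow_add hx,
          show s + 1 + -1 = s by ring]

-- norm version: ∫ t in Ioi 0, ‖t ^ (-s-1) * sin (t*x)‖ = x ^ s * ∫ u in Ioi 0, ‖u^(-s-1) * sin u‖
lemma aux_scale_norm {s x : ℝ} (hs1 : 0 < s) (hs2 : s < 1) (hx : 0 < x) :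
    ∫ t in Ioi (0:ℝ), ‖t ^ (-s - 1) * Real.sin (t * x)‖
      = x ^ s * ∫ u in Ioi (0:ℝ), ‖u ^ (-s - 1) * Real.sin u‖ := by
  have h := integral_comp_mul_left_Ioi (fun u : ℝ => ‖u ^ (-s - 1) * Real.sin u‖) 0 hx
  rw [mul_zero] at h
  calc ∫ t in Ioi (0:ℝ), ‖t ^ (-s - 1) * Real.sin (t * x)‖
      = ∫ t in Ioi (0:ℝ), x ^ (s + 1) * ‖(x * t) ^ (-s - 1) * Real.sin (x * t)‖ := by
        refine setIntegral_congr_fun measurableSet_Ioi (fun t ht => ?_)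
        rw [aux_scale_eq hx t ht, norm_mul, norm_eq_abs (x ^ (s+1)),
          abs_of_pos (rpow_pos_of_pos hx _)]
    _ = x ^ (s + 1) * ∫ t in Ioi (0:ℝ), ‖(x * t) ^ (-s - 1) * Real.sin (x * t)‖ :=
        integral_const_mul _ _
    _ = x ^ (s + 1) * (x⁻¹ * ∫ u in Ioi (0:ℝ), ‖u ^ (-s - 1) * Real.sin u‖) := by
        rw [h, smul_eq_mul]
    _ = x ^ s * ∫ u in Ioi (0:ℝ), ‖u ^ (-s - 1) * Real.sin u‖ := by
        rw [← mul_assoc, ← Real.rpow_neg_one x, ← Real.rpow_add hx,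
          show s + 1 + -1 = s by ring]

theorem stmt6 {Ω Ω' : Type*} [MeasurableSpace Ω] [MeasurableSpace Ω']
    (μ : Measure Ω) (ν : Measure Ω') [IsProbabilityMeasure μ] [IsProbabilityMeasure ν]
    (X : Ω → ℝ) (Y : Ω' → ℝ) (hX : Measurable X) (hY : Measurable Y)
    (hXpos : ∀ ω, 0 < X ω) (hYpos : ∀ ω, 0 < Y ω)
    (hsin : ∀ t : ℝ, 0 ≤ t → 0 ≤ ∫ ω, Real.sin (t * X ω) ∂μ)
    (hdens : Measure.map Y ν
      = volume.withDensity
          (fun t => ENNReal.ofReal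
            (if 0 < t then 2 / π * (∫ ω, Real.sin (t * X ω) ∂μ) / t else 0)))
    (s : ℝ) (hs1 : 0 < s) (hs2 : s < 1)
    (hint : Integrable (fun ω => X ω ^ s) μ) :
    ∫ ω, Y ω ^ (-s) ∂ν = (∫ ω, X ω ^ s ∂μ) / (Real.Gamma (s + 1) * Real.cos (s * π / 2)) := by
  have hπ : (0:ℝ) < π := Real.pi_pos
  have hG : 0 < Real.Gamma (s + 1) := Real.Gamma_pos_of_pos (by linarith)
  have hcos : 0 < Real.cos (s * π / 2) := by
    apply Real.cos_pos_of_mem_Ioo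
    constructor
    · nlinarith
    · nlinarith
  set φ : ℝ → ℝ := fun t => ∫ ω, Real.sin (t * X ω) ∂μ with hφdef
  have hφcont : Continuous φ := by
    apply MeasureTheory.continuous_of_dominated (bound := fun _ => (1:ℝ))
    · intro t
      exact (Real.measurable_sin.comp ((measurable_const.mul hX))).aestronglyMeasurable
    · intro t
      filter_upwards with ω
      rw [norm_eq_abs]
      exact abs_sin_le_one _
    · exact integrable_const 1
    · filter_upwards with ω
      exact Real.continuous_sin.comp (continuous_id.mul continuous_const)
  set D : ℝ → ℝ := fun t => if 0 < t then 2 / π * φ t / t else 0 with hDdef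
  have hDmeas : Measurable D := by
    refine Measurable.ite (measurableSet_lt measurable_const measurable_id) ?_ measurable_const
    exact ((hφcont.measurable.const_mul _).div measurable_id)
  have hDnonneg : ∀ t, 0 ≤ D t := by
    intro t
    rw [hDdef]
    dsimp only
    split_ifs with ht
    · apply div_nonneg _ ht.le
      apply mul_nonneg _ (hsin t ht.le)
      positivity
    · exact le_rfl
  -- step 1: map
  have step1 : ∫ ω, Y ω ^ (-s) ∂ν = ∫ t, t ^ (-s) ∂(Measure.map Y ν) :=
    (integral_map hY.aemeasurable (aux_meas_rpow (-s)).aestronglyMeasurable).symm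
  -- step 2: withDensity
  have step2 : ∫ t, t ^ (-s) ∂(Measure.map Y ν) = ∫ t, D t * t ^ (-s) := by
    rw [hdens]
    have : (fun t : ℝ => ENNReal.ofReal (if 0 < t then 2 / π * (∫ ω, Real.sin (t * X ω) ∂μ) / t else 0))
        = fun t : ℝ => ((Real.toNNReal (D t) : ℝ≥0) : ℝ≥0∞) := by
      funext t
      rfl
    have hm : Measurable fun t => (D t).toNNReal := measurable_real_toNNReal.comp hDmeas
    rw [this, integral_withDensity_eq_integral_smul hm (fun t => t ^ (-s))]
    congr 1
    funext t
    rw [NNReal.smul_def, Real.coe_toNNReal _ (hDnonneg t), smul_eq_mul]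
  -- step 3: restrict to Ioi 0
  have step3 : ∫ t, D t * t ^ (-s) = ∫ t in Ioi (0:ℝ), D t * t ^ (-s) := by
    rw [← integral_indicator measurableSet_Ioi]
    congr 1
    funext t
    by_cases ht : 0 < t
    · rw [indicator_of_mem (mem_Ioi.mpr ht)]
    · rw [indicator_of_notMem (by simpa using ht), hDdef]
      dsimp only
      rw [if_neg ht, zero_mul]
  -- step 4
  have step4 : ∫ t in Ioi (0:ℝ), D t * t ^ (-s)
      = (2 / π) * ∫ t in Ioi (0:ℝ), t ^ (-s - 1) * φ t := by
    rw [← integral_const_mul]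
    refine setIntegral_congr_fun measurableSet_Ioi (fun t ht => ?_)
    have ht0 : (0:ℝ) < t := ht
    rw [hDdef]
    dsimp only
    rw [if_pos ht0]
    rw [show t ^ (-s - 1) = t ^ (-s) * t ^ (-1:ℝ) by
      rw [← Real.rpow_add ht0]; ring_nf]
    rw [Real.rpow_neg_one]
    field_simp
  -- step 5: pull constant into the ω-integral
  have step5 : ∀ t ∈ Ioi (0:ℝ), t ^ (-s - 1) * φ t
      = ∫ ω, t ^ (-s - 1) * Real.sin (t * X ω) ∂μ := by
    intro t ht
    rw [hφdef]
    exact (integral_const_mul _ _).symm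
  -- Fubini setup
  have hmeasF : AEStronglyMeasurable
      (fun p : Ω × ℝ => p.2 ^ (-s - 1) * Real.sin (p.2 * X p.1))
      (μ.prod (volume.restrict (Ioi 0))) := by
    refine Measurable.aestronglyMeasurable ?_
    exact ((aux_meas_rpow _).comp measurable_snd).mul
      (Real.measurable_sin.comp (measurable_snd.mul (hX.comp measurable_fst)))
  have hIntF : Integrable (fun p : Ω × ℝ => p.2 ^ (-s - 1) * Real.sin (p.2 * X p.1))
      (μ.prod (volume.restrict (Ioi 0))) := by
    rw [integrable_prod_iff hmeasF]
    constructor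
    · filter_upwards with ω
      exact aux_int_sin_scaled hs1 hs2 (hXpos ω)
    · have : Integrable (fun ω => X ω ^ s * ∫ u in Ioi (0:ℝ), ‖u ^ (-s - 1) * Real.sin u‖) μ :=
        hint.mul_const _
      refine this.congr ?_
      filter_upwards with ω
      exact (aux_scale_norm hs1 hs2 (hXpos ω)).symm
  have swap := MeasureTheory.integral_integral_swap
    (f := fun (ω : Ω) (t : ℝ) => t ^ (-s - 1) * Real.sin (t * X ω)) hIntF
  -- compute the ω-then-t side
  have lhs_eq : ∫ ω, (∫ t in Ioi (0:ℝ), t ^ (-s - 1) * Real.sin (t * X ω)) ∂μ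
      = (π / (2 * Real.Gamma (s + 1) * Real.cos (s * π / 2))) * ∫ ω, X ω ^ s ∂μ := by
    rw [← integral_const_mul]
    refine integral_congr_ae ?_
    filter_upwards with ω
    rw [aux_scale hs1 hs2 (hXpos ω), aux_I hs1 hs2]
    ring
  rw [step1, step2, step3, step4,
    setIntegral_congr_fun measurableSet_Ioi step5, ← swap, lhs_eq]
  rw [show 2 / π * (π / (2 * Real.Gamma (s + 1) * Real.cos (s * π / 2)) * ∫ ω, X ω ^ s ∂μ)
      = (∫ ω, X ω ^ s ∂μ) / (Real.Gamma (s + 1) * Real.cos (s * π / 2)) by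
    field_simp]
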